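/- arXiv:1602.02968 — 2 statements merged into one kernel-verified Lean document; each statement's English description precedes it below -/
import Mathlib

section
/- Let g be a simple Lie algebra, ρ the half-sum of positive roots, g∨ the dual Coxeter number, and ω a vertex of the Weyl alcove A lying in the coweight lattice (a 'sharp corner', i.e. in the orbit of 0 under the isometry group of A). Then ‖ρ − g∨ω‖ = ‖ρ‖ with respect to the basic inner product. -/
open scoped RealInnerProductSpace

noncomputable section

/-- A reduced, irreducible (i.e. simple), crystallographic root system in a Euclidean space,
normalized so that long roots have square length `2` (the basic inner product), together with
a choice of a base of simple roots and the corresponding highest root. -/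
structure SimpleRootSystem (n : ℕ) where
  roots : Finset (EuclideanSpace ℝ (Fin n))
  simpleRoot : Fin n → EuclideanSpace ℝ (Fin n)
  highestRoot : EuclideanSpace ℝ (Fin n)
  simpleRoot_mem : ∀ i, simpleRoot i ∈ roots
  highestRoot_mem : highestRoot ∈ roots
  ne_zero : ∀ α ∈ roots, α ≠ 0
  neg_mem : ∀ α ∈ roots, -α ∈ roots
  span_top : Submodule.span ℝ (roots : Set (EuclideanSpace ℝ (Fin n))) = ⊤
  crystallographic : ∀ α ∈ roots, ∀ β ∈ roots, ∃ k : ℤ,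
    2 * ⟪α, β⟫ / ⟪α, α⟫ = (k : ℝ)
  reflect_mem : ∀ α ∈ roots, ∀ β ∈ roots,
    β - (2 * ⟪α, β⟫ / ⟪α, α⟫) • α ∈ roots
  reduced : ∀ α ∈ roots, ∀ t : ℝ, t • α ∈ roots → t = 1 ∨ t = -1
  irreducible : ∀ s : Set (EuclideanSpace ℝ (Fin n)),
    (∀ α ∈ roots, ∀ β ∈ roots, α ∈ s → ⟪α, β⟫ ≠ 0 → β ∈ s) →
    (∃ α ∈ roots, α ∈ s) → ∀ β ∈ roots, β ∈ s
  long_normalized : ∀ α ∈ roots, ⟪α, α⟫ ≤ 2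
  exists_long : ∃ α ∈ roots, ⟪α, α⟫ = 2
  simple_base : ∀ α ∈ roots, ∃ c : Fin n → ℤ,
    ((∀ i, 0 ≤ c i) ∨ (∀ i, c i ≤ 0)) ∧ α = ∑ i, (c i : ℝ) • simpleRoot i
  highest : ∀ α ∈ roots, ∃ c : Fin n → ℕ,
    highestRoot = α + ∑ i, (c i : ℝ) • simpleRoot i

namespace SimpleRootSystem

variable {n : ℕ} (S : SimpleRootSystem n)

/-- The coroot `α^∨ = 2α/⟨α,α⟩` of a root `α`, viewed inside `h` via the basic inner product. -/
def coroot (α : EuclideanSpace ℝ (Fin n)) : EuclideanSpace ℝ (Fin n) :=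
  (2 / ⟪α, α⟫) • α

/-- The coroot lattice `Λ_coroot`, the `ℤ`-span of the coroots. -/
def corootLattice : Set (EuclideanSpace ℝ (Fin n)) :=
  (Submodule.span ℤ (coroot '' (S.roots : Set (EuclideanSpace ℝ (Fin n)))) :
    Submodule ℤ (EuclideanSpace ℝ (Fin n)))

/-- The root lattice `Λ_root`, the `ℤ`-span of the roots. -/
def rootLattice : Set (EuclideanSpace ℝ (Fin n)) :=
  (Submodule.span ℤ ((S.roots : Set (EuclideanSpace ℝ (Fin n)))) :
    Submodule ℤ (EuclideanSpace ℝ (Fin n)))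

/-- The coweight lattice `Λ_coweight`, dual to the root lattice: the set of `X` pairing
integrally with every root. -/
def coweightLattice : Set (EuclideanSpace ℝ (Fin n)) :=
  {X | ∀ α ∈ S.roots, ∃ k : ℤ, ⟪α, X⟫ = (k : ℝ)}

/-- The (closed) Weyl alcove `A = {X : αᵢ(X) ≥ 0, α_max(X) ≤ 1}`. -/
def alcove : Set (EuclideanSpace ℝ (Fin n)) :=
  {X | (∀ i, 0 ≤ ⟪S.simpleRoot i, X⟫) ∧ ⟪S.highestRoot, X⟫ ≤ 1}

/-- The set `A^× = Λ_coweight ∩ A` of sharp corners of the Weyl alcove. -/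
def sharpCorners : Set (EuclideanSpace ℝ (Fin n)) :=
  S.coweightLattice ∩ S.alcove

end SimpleRootSystem
namespace SimpleRootSystem

open Finset

variable {n : ℕ} {S : SimpleRootSystem n}

local notation "E" => EuclideanSpace ℝ (Fin n)

lemma inner_self_pos_of_mem {α : E} (hα : α ∈ S.roots) : 0 < ⟪α, α⟫ :=
  real_inner_self_nonneg.lt_of_ne
    (fun h => S.ne_zero α hα (inner_self_eq_zero.1 h.symm))

lemma inner_self_ne_zero_of_mem {α : E} (hα : α ∈ S.roots) : ⟪α, α⟫ ≠ 0 :=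
  (inner_self_pos_of_mem hα).ne'

lemma span_simple_top (S : SimpleRootSystem n) :
    ⊤ ≤ Submodule.span ℝ (Set.range S.simpleRoot) := by
  rw [← S.span_top]
  refine Submodule.span_le.2 ?_
  intro α hα
  obtain ⟨c, -, hc⟩ := S.simple_base α hα
  rw [hc]
  exact Submodule.sum_mem _ fun i _ =>
    Submodule.smul_mem _ _ (Submodule.subset_span ⟨i, rfl⟩)

/-- The simple roots as a basis. -/
def simpleBasis (S : SimpleRootSystem n) : Module.Basis (Fin n) ℝ E :=
  basisOfTopLeSpanOfCardEqFinrank S.simpleRoot S.span_simple_top (by simp)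

@[simp] lemma simpleBasis_apply (S : SimpleRootSystem n) (i : Fin n) :
    S.simpleBasis i = S.simpleRoot i := by
  simp [simpleBasis]

lemma repr_sum (S : SimpleRootSystem n) (c : Fin n → ℝ) (j : Fin n) :
    S.simpleBasis.repr (∑ i, c i • S.simpleRoot i) j = c j := by
  have h : (∑ i, c i • S.simpleRoot i) = ∑ i, c i • S.simpleBasis i := by
    simp
  rw [h, S.simpleBasis.repr_sum_self]


/-- A root is positive if it is a nonnegative integer combination of simple roots. -/
def IsPos (S : SimpleRootSystem n) (α : E) : Prop :=
  ∃ c : Fin n → ℕ, α = ∑ i, (c i : ℝ) • S.simpleRoot i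

open Classical in
/-- The set of positive roots. -/
def posRoots (S : SimpleRootSystem n) : Finset (EuclideanSpace ℝ (Fin n)) :=
  S.roots.filter S.IsPos

open Classical in
lemma mem_posRoots {α : E} : α ∈ S.posRoots ↔ α ∈ S.roots ∧ S.IsPos α :=
  Finset.mem_filter

lemma IsPos.repr_nonneg {α : E} (h : S.IsPos α) (j : Fin n) :
    0 ≤ S.simpleBasis.repr α j := by
  obtain ⟨c, rfl⟩ := h
  rw [S.repr_sum]
  positivity

lemma isPos_of_repr_nonneg {α : E} (hα : α ∈ S.roots)
    (h : ∀ j, 0 ≤ S.simpleBasis.repr α j) : S.IsPos α := by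
  obtain ⟨c, hc | hc, hrepr⟩ := S.simple_base α hα
  · exact ⟨fun i => (c i).toNat, by
      rw [hrepr]; congr 1; funext i; congr 1
      show (c i : ℝ) = (((c i).toNat : ℕ) : ℝ)
      exact_mod_cast (Int.toNat_of_nonneg (hc i)).symm⟩
  · exfalso
    have hz : ∀ j, S.simpleBasis.repr α j = 0 := by
      intro j
      have h1 : S.simpleBasis.repr α j = (c j : ℝ) := by
        rw [hrepr, S.repr_sum]
      have h2 : (c j : ℝ) ≤ 0 := by exact_mod_cast hc j
      have := h j
      linarith [h1 ▸ this]
    have : α = 0 := by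
      apply S.simpleBasis.repr.injective
      ext j; simp [hz j]
    exact S.ne_zero α hα this

lemma isPos_or_isPos_neg {α : E} (hα : α ∈ S.roots) :
    S.IsPos α ∨ S.IsPos (-α) := by
  obtain ⟨c, hc | hc, hrepr⟩ := S.simple_base α hα
  · left
    exact ⟨fun i => (c i).toNat, by
      rw [hrepr]; congr 1; funext i; congr 1
      show (c i : ℝ) = (((c i).toNat : ℕ) : ℝ)
      exact_mod_cast (Int.toNat_of_nonneg (hc i)).symm⟩
  · right
    refine ⟨fun i => (-c i).toNat, ?_⟩
    rw [hrepr, ← Finset.sum_neg_distrib]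
    congr 1; funext i
    rw [← neg_smul]; congr 1
    show (-(c i : ℝ)) = (((-c i).toNat : ℕ) : ℝ)
    have h1 : ((-c i).toNat : ℤ) = -c i := Int.toNat_of_nonneg (by have := hc i; omega)
    exact_mod_cast h1.symm

lemma not_isPos_neg {α : E} (hα : α ∈ S.roots) (h : S.IsPos α) :
    ¬ S.IsPos (-α) := by
  intro h'
  have h1 := h.repr_nonneg
  have h2 := h'.repr_nonneg
  have hz : ∀ j, S.simpleBasis.repr α j = 0 := by
    intro j
    have := h2 j
    rw [map_neg] at this
    simp only [Finsupp.coe_neg, Pi.neg_apply] at this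
    linarith [h1 j]
  have : α = 0 := by
    apply S.simpleBasis.repr.injective
    ext j; simp [hz j]
  exact S.ne_zero α hα this

open Classical in
lemma sum_roots_eq_two_mul (f : E → ℝ) (hf : ∀ α, f (-α) = f α) :
    ∑ α ∈ S.roots, f α = 2 * ∑ α ∈ S.posRoots, f α := by
  have hsplit : S.posRoots ∪ S.roots.filter (fun α => ¬ S.IsPos α) = S.roots :=
    Finset.filter_union_filter_not_eq _ _
  have hdisj : Disjoint S.posRoots (S.roots.filter (fun α => ¬ S.IsPos α)) :=
    Finset.disjoint_filter_filter_not _ _ _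
  have hneg : ∑ α ∈ S.roots.filter (fun α => ¬ S.IsPos α), f α
      = ∑ α ∈ S.posRoots, f α := by
    refine Finset.sum_nbij' (fun α => -α) (fun α => -α) ?_ ?_ ?_ ?_ ?_
    · intro α hmem
      rw [Finset.mem_filter] at hmem
      rw [mem_posRoots]
      refine ⟨S.neg_mem α hmem.1, ?_⟩
      rcases isPos_or_isPos_neg hmem.1 with h | h
      · exact absurd h hmem.2
      · exact h
    · intro α hmem
      rw [mem_posRoots] at hmem
      refine Finset.mem_filter.2 ⟨S.neg_mem α hmem.1, ?_⟩
      show ¬ S.IsPos (-α)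
      exact not_isPos_neg hmem.1 hmem.2
    · intro α _; simp
    · intro α _; simp
    · intro α _; rw [hf]
  rw [← hsplit, Finset.sum_union hdisj, hneg]
  ring


/-- Reflection in the hyperplane orthogonal to `β`, as a linear map. -/
def reflLM (β : E) : EuclideanSpace ℝ (Fin n) →ₗ[ℝ] EuclideanSpace ℝ (Fin n) where
  toFun x := x - (2 * ⟪β, x⟫ / ⟪β, β⟫) • β
  map_add' x y := by
    simp only [inner_add_right]
    rw [show 2 * (⟪β, x⟫ + ⟪β, y⟫) / ⟪β, β⟫
        = 2 * ⟪β, x⟫ / ⟪β, β⟫ + 2 * ⟪β, y⟫ / ⟪β, β⟫ by ring, add_smul]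
    abel
  map_smul' c x := by
    simp only [real_inner_smul_right, RingHom.id_apply, smul_sub, smul_smul]
    congr 2
    ring

lemma reflLM_apply (β x : E) : reflLM β x = x - (2 * ⟪β, x⟫ / ⟪β, β⟫) • β := rfl

lemma reflLM_mem_roots {β α : E} (hβ : β ∈ S.roots) (hα : α ∈ S.roots) :
    reflLM β α ∈ S.roots := S.reflect_mem β hβ α hα

lemma inner_reflLM_right {β : E} (hβ : ⟪β, β⟫ ≠ 0) (x : E) :
    ⟪β, reflLM β x⟫ = -⟪β, x⟫ := by
  rw [reflLM_apply, inner_sub_right, real_inner_smul_right, div_mul_cancel₀ _ hβ]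
  ring

lemma inner_reflLM_left' (β x y : E) :
    ⟪reflLM β x, y⟫ = ⟪x, reflLM β y⟫ := by
  rw [reflLM_apply, reflLM_apply, inner_sub_left, inner_sub_right,
    real_inner_smul_left, real_inner_smul_right]
  rw [real_inner_comm β x, real_inner_comm y β]
  ring

lemma reflLM_involutive {β : E} (hβ : ⟪β, β⟫ ≠ 0) (x : E) :
    reflLM β (reflLM β x) = x := by
  rw [reflLM_apply, reflLM_apply, inner_sub_right, real_inner_smul_right,
    div_mul_cancel₀ _ hβ]
  rw [show 2 * (⟪β, x⟫ - 2 * ⟪β, x⟫) / ⟪β, β⟫ = -(2 * ⟪β, x⟫ / ⟪β, β⟫) by ring]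
  rw [neg_smul]
  abel

lemma inner_reflLM_reflLM {β : E} (hβ : ⟪β, β⟫ ≠ 0) (x y : E) :
    ⟪reflLM β x, reflLM β y⟫ = ⟪x, y⟫ := by
  rw [inner_reflLM_left', reflLM_involutive hβ]

lemma eq_zero_of_inner_roots_eq_zero {v : E}
    (h : ∀ α ∈ S.roots, ⟪α, v⟫ = 0) : v = 0 := by
  have hv : v ∈ (Submodule.span ℝ (S.roots : Set (EuclideanSpace ℝ (Fin n))))ᗮ := by
    rw [Submodule.mem_orthogonal]
    intro u hu
    induction hu using Submodule.span_induction with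
    | mem u hu => exact h u hu
    | zero => simp
    | add u w _ _ h1 h2 => rw [inner_add_left, h1, h2]; ring
    | smul c u _ h1 => rw [real_inner_smul_left, h1]; ring
  rw [S.span_top, Submodule.top_orthogonal_eq_bot] at hv
  simpa using hv


lemma repr_simpleRoot (S : SimpleRootSystem n) (i j : Fin n) :
    S.simpleBasis.repr (S.simpleRoot i) j = if i = j then 1 else 0 := by
  rw [← S.simpleBasis_apply, S.simpleBasis.repr_self]
  rw [Finsupp.single_apply]

lemma simpleRoot_isPos (S : SimpleRootSystem n) (i : Fin n) :
    S.IsPos (S.simpleRoot i) :=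
  isPos_of_repr_nonneg (S.simpleRoot_mem i) (fun j => by
    rw [S.repr_simpleRoot]; split <;> norm_num)

open Classical in
lemma simpleRoot_mem_posRoots (S : SimpleRootSystem n) (i : Fin n) :
    S.simpleRoot i ∈ S.posRoots :=
  mem_posRoots.2 ⟨S.simpleRoot_mem i, S.simpleRoot_isPos i⟩

lemma exists_pos_coord {α : E} (hα : α ∈ S.roots) (hp : S.IsPos α) {i : Fin n}
    (hne : α ≠ S.simpleRoot i) : ∃ j, j ≠ i ∧ 0 < S.simpleBasis.repr α j := by
  by_contra hcon
  push_neg at hcon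
  have hz : ∀ j, j ≠ i → S.simpleBasis.repr α j = 0 := fun j hj =>
    le_antisymm (hcon j hj) (hp.repr_nonneg j)
  have ha : α = S.simpleBasis.repr α i • S.simpleRoot i := by
    conv_lhs => rw [← S.simpleBasis.sum_repr α]
    rw [Finset.sum_eq_single i]
    · rw [S.simpleBasis_apply]
    · intro j _ hj
      rw [hz j hj, zero_smul]
    · intro h; exact absurd (Finset.mem_univ i) h
  rcases S.reduced (S.simpleRoot i) (S.simpleRoot_mem i) _ (ha ▸ hα) with h1 | h1
  · exact hne (by rw [ha, h1, one_smul])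
  · have : S.simpleBasis.repr α i = -1 := h1
    linarith [hp.repr_nonneg i]

open Classical in
lemma reflLM_simple_maps_erase {i : Fin n} {α : E}
    (hα : α ∈ S.posRoots.erase (S.simpleRoot i)) :
    reflLM (S.simpleRoot i) α ∈ S.posRoots.erase (S.simpleRoot i) := by
  classical
  rw [Finset.mem_erase, mem_posRoots] at hα
  obtain ⟨hne, hroot, hpos⟩ := hα
  obtain ⟨j, hji, hj⟩ := exists_pos_coord hroot hpos hne
  have hmem : reflLM (S.simpleRoot i) α ∈ S.roots :=
    reflLM_mem_roots (S.simpleRoot_mem i) hroot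
  have hrepr : S.simpleBasis.repr (reflLM (S.simpleRoot i) α) j
      = S.simpleBasis.repr α j := by
    rw [reflLM_apply, map_sub, map_smul]
    simp only [Finsupp.coe_sub, Finsupp.coe_smul, Pi.sub_apply, Pi.smul_apply,
      smul_eq_mul]
    rw [S.repr_simpleRoot, if_neg (fun h => hji h.symm)]
    ring
  have hposr : S.IsPos (reflLM (S.simpleRoot i) α) := by
    rcases isPos_or_isPos_neg hmem with h | h
    · exact h
    · exfalso
      have := h.repr_nonneg j
      rw [map_neg] at this
      simp only [Finsupp.coe_neg, Pi.neg_apply] at this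
      rw [hrepr] at this
      linarith
  rw [Finset.mem_erase, mem_posRoots]
  refine ⟨?_, hmem, hposr⟩
  intro hcon
  rw [hcon, S.repr_simpleRoot, if_neg (fun h => hji h.symm)] at hrepr
  exact absurd hrepr.symm (ne_of_gt hj)

open Classical in
lemma sum_posRoots_erase_inner (S : SimpleRootSystem n) (i : Fin n) :
    ∑ α ∈ S.posRoots.erase (S.simpleRoot i), ⟪S.simpleRoot i, α⟫ = 0 := by
  have hq : ⟪S.simpleRoot i, S.simpleRoot i⟫ ≠ 0 :=
    inner_self_ne_zero_of_mem (S.simpleRoot_mem i)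
  refine Finset.sum_involution (fun α _ => reflLM (S.simpleRoot i) α) ?_ ?_ ?_ ?_
  · intro α _
    rw [inner_reflLM_right hq]
    ring
  · intro α ha hfa hcon
    replace hcon : reflLM (S.simpleRoot i) α = α := hcon
    rw [reflLM_apply, sub_eq_self, smul_eq_zero] at hcon
    rcases hcon with h | h
    · rcases div_eq_zero_iff.1 h with h' | h'
      · rcases mul_eq_zero.1 h' with h'' | h''
        · norm_num at h''
        · exact hfa h''
      · exact hq h'
    · exact S.ne_zero _ (S.simpleRoot_mem i) h
  · intro α ha
    exact reflLM_simple_maps_erase ha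
  · intro α _
    exact reflLM_involutive hq α

open Classical in
lemma inner_simpleRoot_sum_posRoots (S : SimpleRootSystem n) (i : Fin n) :
    ⟪S.simpleRoot i, ∑ α ∈ S.posRoots, α⟫
      = ⟪S.simpleRoot i, S.simpleRoot i⟫ := by
  rw [← Finset.add_sum_erase _ _ (S.simpleRoot_mem_posRoots i)]
  rw [inner_add_right, inner_sum, sum_posRoots_erase_inner]
  ring

lemma inner_simpleRoot_rho {ρ : E}
    (hρ : ∀ i, ⟪coroot (S.simpleRoot i), ρ⟫ = 1) (i : Fin n) :
    ⟪S.simpleRoot i, ρ⟫ = ⟪S.simpleRoot i, S.simpleRoot i⟫ / 2 := by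
  have h := hρ i
  rw [coroot, real_inner_smul_left] at h
  have hq : ⟪S.simpleRoot i, S.simpleRoot i⟫ ≠ 0 :=
    inner_self_ne_zero_of_mem (S.simpleRoot_mem i)
  rw [div_mul_eq_mul_div, div_eq_one_iff_eq hq] at h
  linarith

open Classical in
lemma sum_posRoots_eq_two_smul_rho {ρ : E}
    (hρ : ∀ i, ⟪coroot (S.simpleRoot i), ρ⟫ = 1) :
    ∑ α ∈ S.posRoots, α = (2 : ℝ) • ρ := by
  have key : ∀ β ∈ S.roots, ⟪β, (∑ α ∈ S.posRoots, α) - (2 : ℝ) • ρ⟫ = 0 := by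
    have hsimple : ∀ i, ⟪S.simpleRoot i, (∑ α ∈ S.posRoots, α) - (2 : ℝ) • ρ⟫ = 0 := by
      intro i
      rw [inner_sub_right, real_inner_smul_right, S.inner_simpleRoot_sum_posRoots,
        inner_simpleRoot_rho hρ]
      ring
    intro β hβ
    obtain ⟨c, -, hc⟩ := S.simple_base β hβ
    rw [hc, sum_inner]
    refine Finset.sum_eq_zero fun j _ => ?_
    rw [real_inner_smul_left, hsimple]
    ring
  have := eq_zero_of_inner_roots_eq_zero (S := S) key
  rw [sub_eq_zero] at this
  exact this


lemma highestRoot_isPos (S : SimpleRootSystem n) : S.IsPos S.highestRoot := by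
  obtain ⟨d, hd⟩ := S.highest _ (S.neg_mem _ S.highestRoot_mem)
  refine isPos_of_repr_nonneg S.highestRoot_mem fun j => ?_
  have h2 : S.highestRoot + S.highestRoot = ∑ i, ((d i : ℝ)) • S.simpleRoot i := by
    nth_rewrite 1 [hd]
    abel
  have h3 := congrArg (fun x => S.simpleBasis.repr x j) h2
  simp only [map_add] at h3
  rw [S.repr_sum (fun i => (d i : ℝ))] at h3
  simp only [Finsupp.add_apply] at h3
  have : S.simpleBasis.repr S.highestRoot j = (d j : ℝ) / 2 := by linarith
  rw [this]
  positivity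

open Classical in
lemma highestRoot_mem_posRoots (S : SimpleRootSystem n) :
    S.highestRoot ∈ S.posRoots :=
  mem_posRoots.2 ⟨S.highestRoot_mem, S.highestRoot_isPos⟩

lemma highestRoot_dominant (S : SimpleRootSystem n) (i : Fin n) :
    0 ≤ ⟪S.simpleRoot i, S.highestRoot⟫ := by
  by_contra hneg
  push_neg at hneg
  set q := ⟪S.simpleRoot i, S.simpleRoot i⟫ with hqdef
  have hqpos : 0 < q := inner_self_pos_of_mem (S.simpleRoot_mem i)
  set k := 2 * ⟪S.simpleRoot i, S.highestRoot⟫ / q with hkdef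
  have hk : k < 0 := div_neg_of_neg_of_pos (by linarith) hqpos
  have hβ : reflLM (S.simpleRoot i) S.highestRoot ∈ S.roots :=
    reflLM_mem_roots (S.simpleRoot_mem i) S.highestRoot_mem
  obtain ⟨d, hd⟩ := S.highest _ hβ
  have h3 := congrArg (fun x => S.simpleBasis.repr x i) hd
  simp only [reflLM_apply, map_add, map_sub, map_smul] at h3
  simp only [Finsupp.coe_add, Finsupp.coe_sub, Finsupp.coe_smul, Pi.add_apply,
    Pi.sub_apply, Pi.smul_apply, smul_eq_mul] at h3
  rw [S.repr_sum (fun j => (d j : ℝ)), S.repr_simpleRoot, if_pos rfl] at h3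
  have : k = (d i : ℝ) := by rw [← hkdef] at h3; linarith
  have : (0:ℝ) ≤ k := this ▸ Nat.cast_nonneg (d i)
  linarith

lemma inner_nonneg_of_isPos {x : E} (hx : ∀ i, 0 ≤ ⟪S.simpleRoot i, x⟫)
    {α : E} (h : S.IsPos α) : 0 ≤ ⟪α, x⟫ := by
  obtain ⟨c, rfl⟩ := h
  rw [sum_inner]
  refine Finset.sum_nonneg fun j _ => ?_
  rw [real_inner_smul_left]
  exact mul_nonneg (by positivity) (hx j)

lemma inner_le_inner_highestRoot {x : E} (hx : ∀ i, 0 ≤ ⟪S.simpleRoot i, x⟫)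
    {α : E} (hα : α ∈ S.roots) : ⟪α, x⟫ ≤ ⟪S.highestRoot, x⟫ := by
  obtain ⟨d, hd⟩ := S.highest α hα
  rw [hd, inner_add_left, sum_inner]
  have : 0 ≤ ∑ j, ⟪(d j : ℝ) • S.simpleRoot j, x⟫ := by
    refine Finset.sum_nonneg fun j _ => ?_
    rw [real_inner_smul_left]
    exact mul_nonneg (by positivity) (hx j)
  linarith

open Classical in
lemma exists_dominant_long (S : SimpleRootSystem n) {ρ : E}
    (hρ : ∀ i, ⟪coroot (S.simpleRoot i), ρ⟫ = 1) :
    ∃ γ ∈ S.roots, ⟪γ, γ⟫ = 2 ∧ ∀ i, 0 ≤ ⟪S.simpleRoot i, γ⟫ := by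
  set F := S.roots.filter (fun γ => ⟪γ, γ⟫ = 2) with hF
  have hFne : F.Nonempty := by
    obtain ⟨α, hα, h2⟩ := S.exists_long
    exact ⟨α, Finset.mem_filter.2 ⟨hα, h2⟩⟩
  obtain ⟨γ, hγF, hmax⟩ := Finset.exists_max_image F (fun γ => ⟪ρ, γ⟫) hFne
  rw [hF, Finset.mem_filter] at hγF
  refine ⟨γ, hγF.1, hγF.2, fun i => ?_⟩
  by_contra hneg
  push_neg at hneg
  set q := ⟪S.simpleRoot i, S.simpleRoot i⟫ with hqdef
  have hqpos : 0 < q := inner_self_pos_of_mem (S.simpleRoot_mem i)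
  set γ' := reflLM (S.simpleRoot i) γ with hγ'
  have hγ'mem : γ' ∈ S.roots := reflLM_mem_roots (S.simpleRoot_mem i) hγF.1
  have hγ'long : ⟪γ', γ'⟫ = 2 := by
    rw [hγ', inner_reflLM_reflLM hqpos.ne', hγF.2]
  have hins : ⟪ρ, γ'⟫ > ⟪ρ, γ⟫ := by
    rw [hγ', reflLM_apply, inner_sub_right, real_inner_smul_right]
    have hρi : ⟪ρ, S.simpleRoot i⟫ = q / 2 := by
      rw [real_inner_comm]
      exact inner_simpleRoot_rho hρ i
    rw [hρi]
    have hkneg : 2 * ⟪S.simpleRoot i, γ⟫ / q < 0 :=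
      div_neg_of_neg_of_pos (by linarith) hqpos
    nlinarith
  have := hmax γ' (Finset.mem_filter.2 ⟨hγ'mem, hγ'long⟩)
  linarith

lemma highestRoot_long (S : SimpleRootSystem n) {ρ : E}
    (hρ : ∀ i, ⟪coroot (S.simpleRoot i), ρ⟫ = 1) :
    ⟪S.highestRoot, S.highestRoot⟫ = 2 := by
  refine le_antisymm (S.long_normalized _ S.highestRoot_mem) ?_
  obtain ⟨γ, hγ, hγ2, hγdom⟩ := S.exists_dominant_long hρ
  obtain ⟨d, hd⟩ := S.highest γ hγ
  set s := ∑ j, ((d j : ℝ)) • S.simpleRoot j with hs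
  have h1 : 0 ≤ ⟪γ, s⟫ := by
    rw [real_inner_comm]
    exact inner_nonneg_of_isPos hγdom ⟨d, rfl⟩
  have h2 : 0 ≤ ⟪s, s⟫ := real_inner_self_nonneg
  have : ⟪S.highestRoot, S.highestRoot⟫ = ⟪γ, γ⟫ + 2 * ⟪γ, s⟫ + ⟪s, s⟫ := by
    rw [hd, inner_add_left, inner_add_right, inner_add_right,
      real_inner_comm s γ]
    ring
  rw [this, hγ2]
  linarith


/-- The operator `x ↦ ∑_{α ∈ Δ} ⟨α, x⟩ α`. -/
def casimir (S : SimpleRootSystem n) :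
    EuclideanSpace ℝ (Fin n) →ₗ[ℝ] EuclideanSpace ℝ (Fin n) where
  toFun x := ∑ α ∈ S.roots, ⟪α, x⟫ • α
  map_add' x y := by
    simp only [inner_add_right, add_smul, Finset.sum_add_distrib]
  map_smul' c x := by
    simp only [real_inner_smul_right, RingHom.id_apply, mul_smul, ← Finset.smul_sum]

lemma casimir_apply (S : SimpleRootSystem n) (x : EuclideanSpace ℝ (Fin n)) :
    S.casimir x = ∑ α ∈ S.roots, ⟪α, x⟫ • α := rfl

lemma inner_casimir (S : SimpleRootSystem n) (x y : EuclideanSpace ℝ (Fin n)) :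
    ⟪S.casimir x, y⟫ = ∑ α ∈ S.roots, ⟪α, x⟫ * ⟪α, y⟫ := by
  rw [casimir_apply, sum_inner]
  simp only [real_inner_smul_left]

lemma casimir_isSymmetric (S : SimpleRootSystem n) :
    LinearMap.IsSymmetric S.casimir := by
  intro x y
  rw [inner_casimir, real_inner_comm, inner_casimir]
  refine Finset.sum_congr rfl fun α _ => ?_
  ring

lemma casimir_comm_reflLM {β : E} (hβ : β ∈ S.roots) (x : E) :
    S.casimir (reflLM β x) = reflLM β (S.casimir x) := by
  have hq : ⟪β, β⟫ ≠ 0 := inner_self_ne_zero_of_mem hβ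
  rw [casimir_apply, casimir_apply, map_sum]
  have h1 : ∀ α, ⟪α, reflLM β x⟫ = ⟪reflLM β α, x⟫ := fun α =>
    (inner_reflLM_left' β α x).symm
  calc ∑ α ∈ S.roots, ⟪α, reflLM β x⟫ • α
      = ∑ α ∈ S.roots, ⟪reflLM β α, x⟫ • α := by
        exact Finset.sum_congr rfl fun α _ => by rw [h1]
    _ = ∑ α ∈ S.roots, reflLM β (⟪α, x⟫ • α) := by
        refine Finset.sum_nbij' (fun α => reflLM β α) (fun α => reflLM β α)
          ?_ ?_ ?_ ?_ ?_
        · intro α hα; exact reflLM_mem_roots hβ hα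
        · intro α hα; exact reflLM_mem_roots hβ hα
        · intro α _; exact reflLM_involutive hq α
        · intro α _; exact reflLM_involutive hq α
        · intro α hα
          rw [map_smul, reflLM_involutive hq]

lemma casimir_eq_smul_id (S : SimpleRootSystem n) :
    ∃ c : ℝ, ∀ x, S.casimir x = c • x := by
  obtain ⟨α₀, hα₀, -⟩ := S.exists_long
  haveI : Nontrivial (EuclideanSpace ℝ (Fin n)) := ⟨⟨α₀, 0, S.ne_zero _ hα₀⟩⟩
  have heig := S.casimir_isSymmetric.hasEigenvalue_iSup_of_finiteDimensional
  obtain ⟨v, hv1, hv0⟩ := heig.exists_hasEigenvector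
  set c := (⨆ x : { x : EuclideanSpace ℝ (Fin n) // x ≠ 0 },
    RCLike.re ⟪S.casimir x, (x : EuclideanSpace ℝ (Fin n))⟫ / ‖(x : EuclideanSpace ℝ (Fin n))‖ ^ 2 : ℝ)
  have hv : S.casimir v = c • v := by
    have := Module.End.mem_eigenspace_iff.1 hv1
    exact this
  refine ⟨c, ?_⟩
  set s : Set (EuclideanSpace ℝ (Fin n)) := {x | S.casimir x = c • x} with hs
  have hs_smul : ∀ (t : ℝ) x, x ∈ s → t • x ∈ s := by
    intro t x hx
    show S.casimir (t • x) = c • t • x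
    rw [map_smul, hx, smul_comm]
  have hs_sub : ∀ x y, x ∈ s → y ∈ s → x - y ∈ s := by
    intro x y hx hy
    show S.casimir (x - y) = c • (x - y)
    rw [map_sub, hx, hy, smul_sub]
  have hrefl : ∀ β ∈ S.roots, ∀ x ∈ s, reflLM β x ∈ s := by
    intro β hβ x hx
    show S.casimir (reflLM β x) = c • reflLM β x
    rw [casimir_comm_reflLM hβ, hx, map_smul]
  have hroot_of_inner : ∀ β ∈ S.roots, ∀ x ∈ s, ⟪β, x⟫ ≠ 0 → β ∈ s := by
    intro β hβ x hx hne
    have hq : ⟪β, β⟫ ≠ 0 := inner_self_ne_zero_of_mem hβ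
    have h2 : x - reflLM β x ∈ s := hs_sub _ _ hx (hrefl β hβ x hx)
    have h3 : x - reflLM β x = (2 * ⟪β, x⟫ / ⟪β, β⟫) • β := by
      rw [reflLM_apply]
      abel
    have hnum : 2 * ⟪β, x⟫ ≠ 0 := by
      intro h
      rcases mul_eq_zero.1 h with h' | h'
      · norm_num at h'
      · exact hne h'
    have hk : (2 * ⟪β, x⟫ / ⟪β, β⟫) ≠ 0 := div_ne_zero hnum hq
    rw [h3] at h2
    have h4 := hs_smul (2 * ⟪β, x⟫ / ⟪β, β⟫)⁻¹ _ h2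
    rw [smul_smul, inv_mul_cancel₀ hk, one_smul] at h4
    exact h4
  obtain ⟨β₀, hβ₀, hβ₀ne⟩ : ∃ β ∈ S.roots, ⟪β, v⟫ ≠ 0 := by
    by_contra h
    push_neg at h
    exact hv0 (eq_zero_of_inner_roots_eq_zero (S := S) h)
  have hprop : ∀ α ∈ S.roots, ∀ β ∈ S.roots, α ∈ s → ⟪α, β⟫ ≠ 0 → β ∈ s := by
    intro α hα β hβ hαs hne
    exact hroot_of_inner β hβ α hαs (by rw [real_inner_comm]; exact hne)
  have hall := S.irreducible s hprop ⟨β₀, hβ₀, hroot_of_inner β₀ hβ₀ v hv hβ₀ne⟩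
  intro x
  have hx : x ∈ Submodule.span ℝ (S.roots : Set (EuclideanSpace ℝ (Fin n))) := by
    rw [S.span_top]; trivial
  induction hx using Submodule.span_induction with
  | mem u hu => exact hall u hu
  | zero => simp
  | add u w _ _ h1 h2 =>
    show S.casimir (u + w) = c • (u + w)
    rw [map_add, h1, h2, smul_add]
  | smul t u _ h1 =>
    show S.casimir (t • u) = c • t • u
    rw [map_smul, h1, smul_comm]


lemma sq_eq_self_of_int {t : ℝ} (h : ∃ k : ℤ, t = k) (h0 : 0 ≤ t) (h1 : t ≤ 1) :
    t * t = t := by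
  obtain ⟨k, rfl⟩ := h
  have hk0 : 0 ≤ k := by exact_mod_cast h0
  have hk1 : k ≤ 1 := by exact_mod_cast h1
  interval_cases k <;> norm_num

lemma eq_highestRoot_of_inner_eq_two {ρ : E}
    (hρ : ∀ i, ⟪coroot (S.simpleRoot i), ρ⟫ = 1) {α : E} (hα : α ∈ S.roots)
    (h2 : ⟪α, S.highestRoot⟫ = 2) : α = S.highestRoot := by
  have hlong := S.highestRoot_long hρ
  have hαα : ⟪α, α⟫ = 2 := by
    have hcs := real_inner_mul_inner_self_le α S.highestRoot
    rw [h2, hlong] at hcs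
    have hle := S.long_normalized α hα
    have hpos : 0 < ⟪α, α⟫ := inner_self_pos_of_mem hα
    nlinarith
  have hnα : ‖α‖ * ‖α‖ = 2 := by rw [← real_inner_self_eq_norm_mul_norm]; exact hαα
  have hnh : ‖S.highestRoot‖ * ‖S.highestRoot‖ = 2 := by
    rw [← real_inner_self_eq_norm_mul_norm]; exact hlong
  have hnn : ‖α‖ = ‖S.highestRoot‖ := by
    nlinarith [norm_nonneg α, norm_nonneg S.highestRoot]
  have hprod : ⟪α, S.highestRoot⟫ = ‖α‖ * ‖S.highestRoot‖ := by
    rw [h2, ← hnn, hnα]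
  have heq := inner_eq_norm_mul_iff_real.1 hprod
  rw [← hnn] at heq
  have hα0 : ‖α‖ ≠ 0 := by
    intro h
    rw [h] at hnα
    norm_num at hnα
  exact smul_right_injective _ hα0 heq

open Classical in
lemma pair_highest_sq {ρ : E}
    (hρ : ∀ i, ⟪coroot (S.simpleRoot i), ρ⟫ = 1) {α : E}
    (hα : α ∈ S.posRoots.erase S.highestRoot) :
    ⟪α, S.highestRoot⟫ * ⟪α, S.highestRoot⟫ = ⟪α, S.highestRoot⟫ := by
  rw [Finset.mem_erase, mem_posRoots] at hα
  obtain ⟨hne, hroot, hpos⟩ := hα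
  have hlong := S.highestRoot_long hρ
  have hint : ∃ k : ℤ, ⟪α, S.highestRoot⟫ = k := by
    obtain ⟨k, hk⟩ := S.crystallographic _ S.highestRoot_mem _ hroot
    rw [hlong] at hk
    have hxx : 2 * ⟪S.highestRoot, α⟫ / 2 = ⟪S.highestRoot, α⟫ := by ring
    rw [hxx] at hk
    exact ⟨k, by rw [real_inner_comm]; exact hk⟩
  have h0 : 0 ≤ ⟪α, S.highestRoot⟫ :=
    inner_nonneg_of_isPos S.highestRoot_dominant hpos
  have h2 : ⟪α, S.highestRoot⟫ ≤ 2 := by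
    have := inner_le_inner_highestRoot (S := S) S.highestRoot_dominant hroot
    rw [hlong] at this
    exact this
  have hne2 : ⟪α, S.highestRoot⟫ ≠ 2 := by
    intro h
    exact hne (eq_highestRoot_of_inner_eq_two hρ hroot h)
  obtain ⟨k, hk⟩ := hint
  have hk0 : (0 : ℤ) ≤ k := by rw [hk] at h0; exact_mod_cast h0
  have hk2 : k ≤ 2 := by rw [hk] at h2; exact_mod_cast h2
  have hkne : k ≠ 2 := by
    intro h
    rw [h] at hk
    exact hne2 (by exact_mod_cast hk)
  rw [hk]
  interval_cases k <;> simp_all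

open Classical in
lemma pair_omega_sq {ω : E} (hcw : ω ∈ S.coweightLattice)
    (hdom : ∀ i, 0 ≤ ⟪S.simpleRoot i, ω⟫) (hle : ⟪S.highestRoot, ω⟫ ≤ 1)
    {α : E} (hα : α ∈ S.posRoots) : ⟪α, ω⟫ * ⟪α, ω⟫ = ⟪α, ω⟫ := by
  rw [mem_posRoots] at hα
  obtain ⟨hroot, hpos⟩ := hα
  refine sq_eq_self_of_int (hcw α hroot) (inner_nonneg_of_isPos hdom hpos) ?_
  exact le_trans (inner_le_inner_highestRoot (S := S) hdom hroot) hle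

open Classical in
lemma inner_casimir_self_posRoots (S : SimpleRootSystem n) (x : E) :
    ⟪S.casimir x, x⟫ = 2 * ∑ α ∈ S.posRoots, ⟪α, x⟫ * ⟪α, x⟫ := by
  rw [inner_casimir]
  exact S.sum_roots_eq_two_mul (fun α => ⟪α, x⟫ * ⟪α, x⟫)
    (fun α => by simp only [inner_neg_left]; ring)

end SimpleRootSystem

open SimpleRootSystem in
/-- (Lemma on `Isom(A)`.)  If `ρ` is the Weyl vector (the sum of the
fundamental weights, characterized by `⟨ρ, αᵢ^∨⟩ = 1` for all simple roots `αᵢ`),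
`g^∨ = ⟨ρ, α_max⟩ + 1` is the dual Coxeter number, and `ω` is a sharp corner of the Weyl
alcove (a vertex of `A` lying in the coweight lattice), then `‖ρ - g^∨ • ω‖ = ‖ρ‖`. -/
theorem norm_rho_sub_dualCoxeter_smul_sharpCorner {n : ℕ} (S : SimpleRootSystem n)
    (ρ : EuclideanSpace ℝ (Fin n))
    (hρ : ∀ i, ⟪coroot (S.simpleRoot i), ρ⟫ = 1)
    (gv : ℝ) (hgv : gv = ⟪ρ, S.highestRoot⟫ + 1)
    (ω : EuclideanSpace ℝ (Fin n)) (hω : ω ∈ S.sharpCorners) :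
    ‖ρ - gv • ω‖ = ‖ρ‖ := by
  classical
  obtain ⟨hcw, hdom, hle⟩ : ω ∈ S.coweightLattice ∧ (∀ i, 0 ≤ ⟪S.simpleRoot i, ω⟫)
      ∧ ⟪S.highestRoot, ω⟫ ≤ 1 := ⟨hω.1, hω.2.1, hω.2.2⟩
  obtain ⟨c, hc⟩ := S.casimir_eq_smul_id
  have hlong := S.highestRoot_long hρ
  have h2rho := sum_posRoots_eq_two_smul_rho (S := S) hρ
  -- the sum of pairings of positive roots with any vector
  have hsum : ∀ x : EuclideanSpace ℝ (Fin n),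
      ∑ α ∈ S.posRoots, ⟪α, x⟫ = 2 * ⟪ρ, x⟫ := by
    intro x
    rw [← sum_inner, h2rho, real_inner_smul_left]
  -- compute the Casimir constant
  have hcval : c = 2 * gv := by
    have e1 : ⟪S.casimir S.highestRoot, S.highestRoot⟫ = c * 2 := by
      rw [hc, real_inner_smul_left, hlong]
    have e2 := S.inner_casimir_self_posRoots S.highestRoot
    have e3 : ∑ α ∈ S.posRoots, ⟪α, S.highestRoot⟫ * ⟪α, S.highestRoot⟫
        = (∑ α ∈ S.posRoots, ⟪α, S.highestRoot⟫) + 2 := by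
      rw [← Finset.add_sum_erase _
          (fun α => ⟪α, S.highestRoot⟫ * ⟪α, S.highestRoot⟫)
          S.highestRoot_mem_posRoots,
        ← Finset.add_sum_erase _ (fun α => ⟪α, S.highestRoot⟫)
          S.highestRoot_mem_posRoots]
      have hsq : ∑ α ∈ S.posRoots.erase S.highestRoot,
          ⟪α, S.highestRoot⟫ * ⟪α, S.highestRoot⟫
          = ∑ α ∈ S.posRoots.erase S.highestRoot, ⟪α, S.highestRoot⟫ :=
        Finset.sum_congr rfl fun α hα => pair_highest_sq hρ hα
      rw [hsq, hlong]
      ring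
    have e4 := hsum S.highestRoot
    rw [e3, e4] at e2
    have : ⟪ρ, S.highestRoot⟫ = gv - 1 := by rw [hgv]; ring
    rw [this] at e2
    rw [e1] at e2
    linarith
  -- the key identity
  have hkey : gv * ⟪ω, ω⟫ = 2 * ⟪ρ, ω⟫ := by
    have e1 : ⟪S.casimir ω, ω⟫ = c * ⟪ω, ω⟫ := by
      rw [hc, real_inner_smul_left]
    have e2 := S.inner_casimir_self_posRoots ω
    have e3 : ∑ α ∈ S.posRoots, ⟪α, ω⟫ * ⟪α, ω⟫ = ∑ α ∈ S.posRoots, ⟪α, ω⟫ :=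
      Finset.sum_congr rfl fun α hα => pair_omega_sq hcw hdom hle hα
    rw [e3, hsum ω] at e2
    rw [e1, hcval] at e2
    linarith
  have hfinal : ⟪ρ - gv • ω, ρ - gv • ω⟫ = ⟪ρ, ρ⟫ := by
    rw [inner_sub_left, inner_sub_right, inner_sub_right, real_inner_smul_left,
      real_inner_smul_left, real_inner_smul_right, real_inner_smul_right,
      real_inner_comm ω ρ]
    linear_combination gv * hkey + 2 * gv * (real_inner_comm ω ρ)
  rw [norm_eq_sqrt_real_inner, norm_eq_sqrt_real_inner, hfinal]
end
end

section
/- Let g = g^ss ⊕ z be a reductive Lie algebra of compact type, with g^ss = g₁ ⊕ … ⊕ g_n simple summands. Suppose ⟨·,·⟩ is an invariant symmetric bilinear form on g such that (1/2)⟨X,X⟩ ∈ ℤ for every X in the coroot lattice of g^ss. Then the restriction of ⟨·,·⟩ to each simple summand g_i is an integer multiple of the basic inner product of g_i. -/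
open scoped RealInnerProductSpace

noncomputable section

set_option maxHeartbeats 1000000

open SimpleRootSystem in
/-- Let `g = g₁ ⊕ … ⊕ g_N ⊕ 𝔷` be a reductive Lie algebra of compact type
(simple summands `gᵢ` and abelian part `𝔷`).  An invariant symmetric bilinear form on `g`
corresponds, on the Cartan subalgebra `h = h₁ ⊕ … ⊕ h_N ⊕ 𝔷`, to a symmetric bilinear form
invariant under the Weyl group of each summand.  If `½⟨X,X⟩ ∈ ℤ` for every `X` in the
coroot lattice of `g^ss = g₁ ⊕ … ⊕ g_N`, then the restriction of `⟨·,·⟩` to each simple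
summand `gᵢ` is an integer multiple of the basic inner product of `gᵢ` (normalized so that
short coroots, i.e. long roots, have square norm `2`). -/
theorem restriction_to_simple_summand_is_integer_multiple_of_basic
    (N : ℕ) (d : Fin N → ℕ) (S : ∀ i, SimpleRootSystem (d i)) (m : ℕ)
    (b : ((∀ i, EuclideanSpace ℝ (Fin (d i))) × EuclideanSpace ℝ (Fin m)) →ₗ[ℝ]
         ((∀ i, EuclideanSpace ℝ (Fin (d i))) × EuclideanSpace ℝ (Fin m)) →ₗ[ℝ] ℝ)
    (hsymm : ∀ X Y, b X Y = b Y X)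
    (hWeyl : ∀ (i : Fin N), ∀ α ∈ (S i).roots,
      ∀ X Y : (∀ i, EuclideanSpace ℝ (Fin (d i))) × EuclideanSpace ℝ (Fin m),
        b (Function.update X.1 i (X.1 i - (2 * ⟪α, X.1 i⟫ / ⟪α, α⟫) • α), X.2)
          (Function.update Y.1 i (Y.1 i - (2 * ⟪α, Y.1 i⟫ / ⟪α, α⟫) • α), Y.2) = b X Y)
    (heven : ∀ X : (∀ i, EuclideanSpace ℝ (Fin (d i))) × EuclideanSpace ℝ (Fin m),
      (∀ i, X.1 i ∈ (S i).corootLattice) → X.2 = 0 → ∃ z : ℤ, b X X = 2 * z) :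
    ∀ i : Fin N, ∃ k : ℤ, ∀ x y : EuclideanSpace ℝ (Fin (d i)),
      b (Pi.single i x, 0) (Pi.single i y, 0) = (k : ℝ) * ⟪x, y⟫ := by
  intro i
  set E := EuclideanSpace ℝ (Fin (d i)) with hE
  -- the linear embedding of the i-th summand
  set L : E →ₗ[ℝ] ((∀ j, EuclideanSpace ℝ (Fin (d j))) × EuclideanSpace ℝ (Fin m)) :=
    (LinearMap.single ℝ (fun j => EuclideanSpace ℝ (Fin (d j))) i).prod 0 with hL
  have hLapp : ∀ x : E, L x = (Pi.single i x, 0) := by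
    intro x; simp [hL]
  set B : E →ₗ[ℝ] E →ₗ[ℝ] ℝ := b.compl₁₂ L L with hBdef
  have hB : ∀ x y : E, B x y = b (Pi.single i x, 0) (Pi.single i y, 0) := by
    intro x y; simp [hBdef, hLapp]
  have hupd : ∀ (x w : E),
      Function.update (Pi.single i x : ∀ j, EuclideanSpace ℝ (Fin (d j))) i w
        = Pi.single i w := by
    intro x w
    funext j
    rcases eq_or_ne j i with rfl | h
    · simp
    · simp [Function.update_of_ne h, Pi.single_eq_of_ne h]
  -- Weyl invariance for B
  have hrefl : ∀ α ∈ (S i).roots, ∀ x y : E,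
      B (x - (2 * ⟪α, x⟫ / ⟪α, α⟫) • α) (y - (2 * ⟪α, y⟫ / ⟪α, α⟫) • α) = B x y := by
    intro α hα x y
    have h := hWeyl i α hα (Pi.single i x, 0) (Pi.single i y, 0)
    simp only [Pi.single_eq_same, hupd] at h
    rw [hB, hB]
    exact h
  have hpos : ∀ α ∈ (S i).roots, 0 < ⟪α, α⟫ := by
    intro α hα
    have hne : ⟪α, α⟫ ≠ 0 := fun h => (S i).ne_zero α hα (inner_self_eq_zero.mp h)
    exact lt_of_le_of_ne real_inner_self_nonneg (Ne.symm hne)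
  -- key identity: B α y * ⟪α,α⟫ = B α α * ⟪α,y⟫ for roots α
  have key : ∀ α ∈ (S i).roots, ∀ y : E, B α y * ⟪α, α⟫ = B α α * ⟪α, y⟫ := by
    intro α hα y
    have h := hrefl α hα α y
    have ha2 : ⟪α, α⟫ ≠ 0 := (hpos α hα).ne'
    simp only [map_sub, map_smul, LinearMap.sub_apply, LinearMap.smul_apply,
      smul_eq_mul] at h
    set a : ℝ := ⟪α, α⟫ with ha
    set p : ℝ := ⟪α, y⟫ with hp
    set u : ℝ := B α y with hu
    set v : ℝ := B α α with hv
    have h2 : (2 : ℝ) * a / a = 2 := by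
      rw [mul_div_assoc, div_self ha2, mul_one]
    rw [h2] at h
    -- h is now linear in u, v
    have h5 : (2 * p / a) * v = 2 * u := by linarith
    have h6 : ((2 * p / a) * v) * a = (2 * u) * a := by rw [h5]
    rw [div_mul_eq_mul_div, div_mul_cancel₀ _ ha2] at h6
    linarith
  -- a long root
  obtain ⟨α₀, hα₀, hlong⟩ := (S i).exists_long
  have hsymB : ∀ x y : E, B x y = B y x := by
    intro x y; rw [hB, hB]; exact hsymm _ _
  -- all roots have the same ratio B α α / ⟪α,α⟫
  have croot : ∀ β ∈ (S i).roots, B β β * 2 = B α₀ α₀ * ⟪β, β⟫ := by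
    refine (S i).irreducible {x | B x x * 2 = B α₀ α₀ * ⟪x, x⟫} ?_ ⟨α₀, hα₀, ?_⟩
    · intro α hα β hβ hαs hne
      have hαs' : B α α * 2 = B α₀ α₀ * ⟪α, α⟫ := hαs
      have keyα := key α hα β
      have keyβ := key β hβ α
      rw [hsymB β α, real_inner_comm α β] at keyβ
      have ha2 := (hpos α hα).ne'
      have h1' : (B α α * ⟪β, β⟫) * ⟪α, β⟫ = (B β β * ⟪α, α⟫) * ⟪α, β⟫ := by
        linear_combination ⟪α, α⟫ * keyβ - ⟪β, β⟫ * keyα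
      have h1 : B α α * ⟪β, β⟫ = B β β * ⟪α, α⟫ := mul_right_cancel₀ hne h1'
      have h2 : (B β β * 2) * ⟪α, α⟫ = (B α₀ α₀ * ⟪β, β⟫) * ⟪α, α⟫ := by
        linear_combination ⟪β, β⟫ * hαs' - 2 * h1
      exact mul_right_cancel₀ ha2 h2
    · show B α₀ α₀ * 2 = B α₀ α₀ * ⟪α₀, α₀⟫
      rw [hlong]
  -- integrality from heven
  have hmem : ∀ j, (Pi.single i α₀ : ∀ j, EuclideanSpace ℝ (Fin (d j))) j ∈
      (S j).corootLattice := by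
    intro j
    by_cases h : j = i
    · subst h
      rw [Pi.single_eq_same]
      have hco : coroot α₀ = α₀ := by
        unfold coroot
        rw [hlong]
        norm_num
      show α₀ ∈ (Submodule.span ℤ
        (coroot '' ((S j).roots : Set (EuclideanSpace ℝ (Fin (d j))))) :
        Submodule ℤ (EuclideanSpace ℝ (Fin (d j))))
      exact Submodule.subset_span ⟨α₀, hα₀, hco⟩
    · rw [Pi.single_eq_of_ne h]
      show (0 : EuclideanSpace ℝ (Fin (d j))) ∈ (Submodule.span ℤ
        (coroot '' ((S j).roots : Set (EuclideanSpace ℝ (Fin (d j))))) :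
        Submodule ℤ (EuclideanSpace ℝ (Fin (d j))))
      exact zero_mem _
  obtain ⟨z, hz⟩ := heven (Pi.single i α₀, 0) hmem rfl
  rw [← hB] at hz
  refine ⟨z, ?_⟩
  -- every x is in the span of the roots
  have hspan : ∀ x : E, x ∈ Submodule.span ℝ (((S i).roots : Set E)) := by
    intro x
    rw [(S i).span_top]
    trivial
  -- the conclusion on roots
  have hroot : ∀ α ∈ (S i).roots, ∀ y : E, B α y = (z : ℝ) * ⟪α, y⟫ := by
    intro α hα y
    have ha2 := (hpos α hα).ne'
    have h : B α y * (2 * ⟪α, α⟫) = ((z : ℝ) * ⟪α, y⟫) * (2 * ⟪α, α⟫) := by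
      linear_combination 2 * key α hα y + ⟪α, y⟫ * croot α hα + ⟪α, α⟫ * ⟪α, y⟫ * hz
    exact mul_right_cancel₀ (by positivity) h
  intro x y
  rw [← hB]
  induction hspan x using Submodule.span_induction with
  | mem α hα => exact hroot α hα y
  | zero => simp
  | add u v _ _ hu hv => simp [map_add, LinearMap.add_apply, hu, hv, inner_add_left,
      mul_add]
  | smul t u _ hu => simp only [map_smul, LinearMap.smul_apply, smul_eq_mul, hu,
      real_inner_smul_left]; ring
end
end
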